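/- Assume the bidder values are μ-almost surely nonnegative and integrable, and let δ > 0. If q > 0 satisfies ktw_δ(q) = q (i.e. q is an equilibrium price of the TWDPP mechanism), then W_R(q) ≥ OPT·min(1, δ)/(2·(1 + δ)). -/

import Mathlib

open MeasureTheory Filter

/-- Number of bidders with value at least `q`. -/
noncomputable def demandCount (n : ℕ) (q : ℝ) (v : Fin n → ℝ) : ℕ :=
  (Finset.univ.filter fun i => q ≤ v i).card

/-- Truncated welfare kernel of the TWDPP mechanism. -/
noncomputable def ktw (n m : ℕ) (δ : ℝ) (μ : Measure ℝ) (q : ℝ) : ℝ :=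
  ∫ v, (if demandCount n q v < m then
          (1 / (m : ℝ)) * ∑ i ∈ Finset.univ.filter (fun i => q ≤ v i),
            min (v i) ((1 + δ) * q)
        else (1 + δ) * q) ∂(Measure.pi fun _ : Fin n => μ)

/-- Expected welfare of the uniformly random maximal (RM) allocation at price `q`:
`E[min(1, m/N(q,v)) · Σ_{i : vᵢ ≥ q} vᵢ]`, with the factor equal to `1` when
`N(q,v) ≤ m`. -/
noncomputable def WR (n m : ℕ) (μ : Measure ℝ) (q : ℝ) : ℝ :=
  ∫ v, (if demandCount n q v ≤ m then 1 else (m : ℝ) / (demandCount n q v)) *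
          ∑ i ∈ Finset.univ.filter (fun i => q ≤ v i), v i
    ∂(Measure.pi fun _ : Fin n => μ)

/-- Expected optimal welfare `OPT`. -/
noncomputable def OPTwelfare (n m : ℕ) (μ : Measure ℝ) : ℝ :=
  ∫ v, (((Finset.univ : Finset (Fin n)).powerset.filter fun S => S.card ≤ m).sup'
      ⟨∅, by simp⟩ fun S => ∑ i ∈ S, v i) ∂(Measure.pi fun _ : Fin n => μ)

/-!
Write `N` for the number of bidders with value at least `q` and `W = W_R(q)`. Pointwise, the
truncated welfare kernel is at most `(1 + δ) / m` times the RM welfare, so the equilibrium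
condition gives `m q ≤ (1 + δ) W`; it is also at least `(1 + δ) q` on `{N ≥ m}`, so
`P(N < m) ≥ δ / (1 + δ)`. A bidder with value `vᵢ ≥ q` is served for sure when fewer than `m`
of the others bid, an event independent of `vᵢ` and at least as likely as `{N < m}`; hence
`D δ / (1 + δ) ≤ W` for `D = n E[v; v ≥ q]`. Finally `OPT ≤ m q + D`, and so
`OPT min(1, δ) ≤ m q + δ D ≤ 2 (1 + δ) W`.
-/

namespace TWDPP

section Pointwise

variable {n m : ℕ} {q δ : ℝ}

noncomputable def rmAllocProb (n m : ℕ) (q : ℝ) (v : Fin n → ℝ) : ℝ :=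
  if demandCount n q v ≤ m then 1 else (m : ℝ) / (demandCount n q v)

noncomputable def wrIntegrand (n m : ℕ) (q : ℝ) (v : Fin n → ℝ) : ℝ :=
  rmAllocProb n m q v * ∑ i ∈ Finset.univ.filter (fun i => q ≤ v i), v i

noncomputable def ktwIntegrand (n m : ℕ) (δ q : ℝ) (v : Fin n → ℝ) : ℝ :=
  if demandCount n q v < m then
    (1 / (m : ℝ)) * ∑ i ∈ Finset.univ.filter (fun i => q ≤ v i), min (v i) ((1 + δ) * q)
  else (1 + δ) * q

noncomputable def maxWelfare (n m : ℕ) (v : Fin n → ℝ) : ℝ :=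
  ((Finset.univ : Finset (Fin n)).powerset.filter fun S => S.card ≤ m).sup'
    ⟨∅, by simp⟩ fun S => ∑ i ∈ S, v i

lemma sum_filter_le_eq_sum_indicator (q : ℝ) (v : Fin n → ℝ) :
    ∑ i ∈ Finset.univ.filter (fun i => q ≤ v i), v i = ∑ i, (Set.Ici q).indicator id (v i) := by
  simp [Finset.sum_filter, Set.indicator_apply]

lemma demandCount_nsmul_le_sum (q : ℝ) (v : Fin n → ℝ) :
    demandCount n q v • q ≤ ∑ i ∈ Finset.univ.filter (fun i => q ≤ v i), v i :=
  Finset.card_nsmul_le_sum _ _ _ fun _ hi => (Finset.mem_filter.1 hi).2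

lemma sum_filter_le_nonneg (hq : 0 ≤ q) (v : Fin n → ℝ) :
    0 ≤ ∑ i ∈ Finset.univ.filter (fun i => q ≤ v i), v i :=
  Finset.sum_nonneg fun _ hi => hq.trans (Finset.mem_filter.1 hi).2

lemma rmAllocProb_nonneg (v : Fin n → ℝ) : 0 ≤ rmAllocProb n m q v := by
  unfold rmAllocProb; split_ifs <;> positivity

lemma rmAllocProb_le_one (v : Fin n → ℝ) : rmAllocProb n m q v ≤ 1 := by
  unfold rmAllocProb
  split_ifs with h
  · rfl
  · exact div_le_one_of_le₀ (by exact_mod_cast (not_le.1 h).le) (Nat.cast_nonneg _)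

lemma rmAllocProb_of_le (v : Fin n → ℝ) (h : demandCount n q v ≤ m) : rmAllocProb n m q v = 1 :=
  if_pos h

lemma natCast_mul_le_wrIntegrand (hm : 0 < m) (v : Fin n → ℝ) (h : m ≤ demandCount n q v) :
    m * q ≤ wrIntegrand n m q v := by
  have hN : (0 : ℝ) < demandCount n q v := by exact_mod_cast hm.trans_le h
  have hprob : rmAllocProb n m q v = m / demandCount n q v := by
    unfold rmAllocProb
    split_ifs with h'
    · rw [le_antisymm h' h, div_self (Nat.cast_pos.2 hm).ne']
    · rfl
  calc (m : ℝ) * q = m / demandCount n q v * (demandCount n q v • q) := by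
        rw [nsmul_eq_mul]; field_simp
    _ ≤ wrIntegrand n m q v := by
        rw [wrIntegrand, hprob]
        exact mul_le_mul_of_nonneg_left (demandCount_nsmul_le_sum q v) (by positivity)

lemma wrIntegrand_nonneg (hq : 0 ≤ q) (v : Fin n → ℝ) : 0 ≤ wrIntegrand n m q v :=
  mul_nonneg (rmAllocProb_nonneg v) (sum_filter_le_nonneg hq v)

lemma wrIntegrand_le_sum (hq : 0 ≤ q) (v : Fin n → ℝ) :
    wrIntegrand n m q v ≤ ∑ i ∈ Finset.univ.filter (fun i => q ≤ v i), v i :=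
  mul_le_of_le_one_left (sum_filter_le_nonneg hq v) (rmAllocProb_le_one v)

lemma ktwIntegrand_nonneg (hq : 0 ≤ q) (hδ : 0 ≤ δ) (v : Fin n → ℝ) :
    0 ≤ ktwIntegrand n m δ q v := by
  unfold ktwIntegrand
  split_ifs
  · refine mul_nonneg (by positivity) (Finset.sum_nonneg fun i hi => ?_)
    exact le_min (hq.trans (Finset.mem_filter.1 hi).2) (by positivity)
  · positivity

lemma ktwIntegrand_le_wrIntegrand (hm : 0 < m) (hq : 0 ≤ q) (hδ : 0 ≤ δ) (v : Fin n → ℝ) :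
    ktwIntegrand n m δ q v ≤ (1 + δ) / m * wrIntegrand n m q v := by
  have hm' : (0 : ℝ) < m := by exact_mod_cast hm
  unfold ktwIntegrand
  split_ifs with h
  · rw [wrIntegrand, rmAllocProb_of_le v h.le, one_mul]
    calc 1 / (m : ℝ) * ∑ i ∈ Finset.univ.filter (fun i => q ≤ v i), min (v i) ((1 + δ) * q)
        ≤ 1 / m * ∑ i ∈ Finset.univ.filter (fun i => q ≤ v i), v i := by
          gcongr with i; exact min_le_left _ _
      _ ≤ (1 + δ) / m * ∑ i ∈ Finset.univ.filter (fun i => q ≤ v i), v i := by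
          gcongr
          · exact sum_filter_le_nonneg hq v
          · linarith
  · calc (1 + δ) * q = (1 + δ) / m * (m * q) := by field_simp
      _ ≤ (1 + δ) / m * wrIntegrand n m q v := by
          gcongr; exact natCast_mul_le_wrIntegrand hm v (not_lt.1 h)

lemma indicator_le_ktwIntegrand (hq : 0 ≤ q) (hδ : 0 ≤ δ) (v : Fin n → ℝ) :
    {v | m ≤ demandCount n q v}.indicator (fun _ => (1 + δ) * q) v ≤ ktwIntegrand n m δ q v := by
  refine Set.indicator_apply_le' (fun h => ?_) (fun _ => ktwIntegrand_nonneg hq hδ v)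
  rw [ktwIntegrand, if_neg (not_lt.2 h)]

lemma demandCount_succAbove {k : ℕ} (q : ℝ) (i : Fin (k + 1)) (v : Fin (k + 1) → ℝ) :
    demandCount (k + 1) q v = (if q ≤ v i then 1 else 0) + demandCount k q (i.removeNth v) := by
  simp only [demandCount, Finset.card_filter]
  exact Fin.sum_univ_succAbove _ i

lemma sum_indicator_mul_le_wrIntegrand {k : ℕ} (hq : 0 ≤ q) (v : Fin (k + 1) → ℝ) :
    ∑ i, (Set.Ici q).indicator id (v i) * {w | demandCount k q w < m}.indicator 1 (i.removeNth v)
      ≤ wrIntegrand (k + 1) m q v := by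
  rw [wrIntegrand, sum_filter_le_eq_sum_indicator, Finset.mul_sum]
  refine Finset.sum_le_sum fun i _ => ?_
  by_cases hvi : q ≤ v i
  · by_cases hrest : demandCount k q (i.removeNth v) < m
    · have hN : demandCount (k + 1) q v ≤ m := by
        rw [demandCount_succAbove q i v, if_pos hvi]; omega
      rw [Set.indicator_of_mem (show i.removeNth v ∈ {w | demandCount k q w < m} from hrest),
        rmAllocProb_of_le v hN, Pi.one_apply, mul_one, one_mul]
    · rw [Set.indicator_of_notMem (show i.removeNth v ∉ {w | demandCount k q w < m} from hrest),
        mul_zero]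
      exact mul_nonneg (rmAllocProb_nonneg v) (Set.indicator_nonneg (fun x hx => hq.trans hx) _)
  · simp [Set.indicator_of_notMem (show v i ∉ Set.Ici q from hvi)]

lemma maxWelfare_nonneg (v : Fin n → ℝ) : 0 ≤ maxWelfare n m v :=
  Finset.le_sup'_of_le _ (b := ∅) (by simp) (by simp)

lemma le_add_indicator_Ici (hq : 0 ≤ q) (x : ℝ) : x ≤ q + (Set.Ici q).indicator id x := by
  by_cases hx : q ≤ x
  · rw [Set.indicator_of_mem (show x ∈ Set.Ici q from hx), id]; linarith
  · rw [Set.indicator_of_notMem (show x ∉ Set.Ici q from hx)]; linarith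

lemma maxWelfare_le (hq : 0 ≤ q) (v : Fin n → ℝ) :
    maxWelfare n m v ≤ m * q + ∑ i ∈ Finset.univ.filter (fun i => q ≤ v i), v i := by
  refine Finset.sup'_le _ _ fun S hS => ?_
  have hcard : (S.card : ℝ) ≤ m := by exact_mod_cast (Finset.mem_filter.1 hS).2
  have hind : 0 ≤ (Set.Ici q).indicator (id : ℝ → ℝ) :=
    Set.indicator_nonneg fun x hx => hq.trans hx
  calc ∑ i ∈ S, v i ≤ ∑ i ∈ S, (q + (Set.Ici q).indicator id (v i)) :=
        Finset.sum_le_sum fun i _ => le_add_indicator_Ici hq (v i)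
    _ = S.card * q + ∑ i ∈ S, (Set.Ici q).indicator id (v i) := by
        rw [Finset.sum_add_distrib, Finset.sum_const, nsmul_eq_mul]
    _ ≤ m * q + ∑ i, (Set.Ici q).indicator id (v i) := by
        gcongr
        · exact fun i _ _ => hind (v i)
        · exact Finset.subset_univ S
    _ = _ := by rw [sum_filter_le_eq_sum_indicator]

end Pointwise

section Expectation

variable {n m : ℕ} {q δ : ℝ} {μ : Measure ℝ} [IsProbabilityMeasure μ]

lemma ktw_eq_integral (n m : ℕ) (δ : ℝ) (μ : Measure ℝ) (q : ℝ) :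
    ktw n m δ μ q = ∫ v, ktwIntegrand n m δ q v ∂(Measure.pi fun _ : Fin n => μ) := rfl

lemma WR_eq_integral (n m : ℕ) (μ : Measure ℝ) (q : ℝ) :
    WR n m μ q = ∫ v, wrIntegrand n m q v ∂(Measure.pi fun _ : Fin n => μ) := rfl

lemma OPTwelfare_eq_integral (n m : ℕ) (μ : Measure ℝ) :
    OPTwelfare n m μ = ∫ v, maxWelfare n m v ∂(Measure.pi fun _ : Fin n => μ) := rfl

lemma measurable_demandCount (n : ℕ) (q : ℝ) : Measurable (demandCount n q) := by
  unfold demandCount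
  simp only [Finset.card_filter]
  exact Finset.measurable_sum _ fun i _ =>
    Measurable.ite (measurableSet_le measurable_const (measurable_pi_apply i)) measurable_const
      measurable_const

lemma measurable_sum_filter_le (n : ℕ) (q : ℝ) :
    Measurable fun v : Fin n → ℝ => ∑ i ∈ Finset.univ.filter (fun i => q ≤ v i), v i := by
  simp only [sum_filter_le_eq_sum_indicator]
  exact Finset.measurable_sum _ fun i _ =>
    (measurable_id.indicator measurableSet_Ici).comp (measurable_pi_apply i)

lemma measurable_wrIntegrand (n m : ℕ) (q : ℝ) : Measurable (wrIntegrand n m q) :=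
  ((measurable_from_nat (f := fun N : ℕ => if N ≤ m then (1 : ℝ) else m / N)).comp
    (measurable_demandCount n q)).mul (measurable_sum_filter_le n q)

lemma measurable_ktwIntegrand (n m : ℕ) (δ q : ℝ) : Measurable (ktwIntegrand n m δ q) := by
  unfold ktwIntegrand
  simp only [Finset.sum_filter]
  refine Measurable.ite (measurable_demandCount n q measurableSet_Iio)
    (measurable_const.mul (Finset.measurable_sum _ fun i _ => ?_)) measurable_const
  exact Measurable.ite (measurableSet_le measurable_const (measurable_pi_apply i))
    ((measurable_pi_apply i).min measurable_const) measurable_const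

lemma integrable_sum_filter_le (hint : Integrable (id : ℝ → ℝ) μ) (n : ℕ) (q : ℝ) :
    Integrable (fun v : Fin n → ℝ => ∑ i ∈ Finset.univ.filter (fun i => q ≤ v i), v i)
      (Measure.pi fun _ => μ) := by
  simp only [sum_filter_le_eq_sum_indicator]
  exact integrable_finsetSum _ fun i _ => integrable_comp_eval (hint.indicator measurableSet_Ici)

lemma integral_sum_filter_le (hint : Integrable (id : ℝ → ℝ) μ) (n : ℕ) (q : ℝ) :
    ∫ v, ∑ i ∈ Finset.univ.filter (fun i => q ≤ v i), v i ∂(Measure.pi fun _ : Fin n => μ)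
      = n * ∫ x in Set.Ici q, x ∂μ := by
  simp only [sum_filter_le_eq_sum_indicator]
  rw [integral_finsetSum _ fun i _ => integrable_comp_eval (hint.indicator measurableSet_Ici)]
  have h (i : Fin n) : ∫ v, (Set.Ici q).indicator id (v i) ∂(Measure.pi fun _ => μ)
      = ∫ x in Set.Ici q, x ∂μ := by
    rw [integral_comp_eval (μ := fun _ => μ)
      (hint.indicator measurableSet_Ici).aestronglyMeasurable, integral_indicator measurableSet_Ici]
    rfl
  simp [h]

lemma integrable_wrIntegrand (hint : Integrable (id : ℝ → ℝ) μ) (hq : 0 ≤ q) :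
    Integrable (wrIntegrand n m q) (Measure.pi fun _ => μ) :=
  (integrable_sum_filter_le hint n q).mono' (measurable_wrIntegrand n m q).aestronglyMeasurable
    (ae_of_all _ fun v => by
      rw [Real.norm_of_nonneg (wrIntegrand_nonneg hq v)]
      exact wrIntegrand_le_sum hq v)

lemma integrable_ktwIntegrand (hint : Integrable (id : ℝ → ℝ) μ) (hm : 0 < m) (hq : 0 ≤ q)
    (hδ : 0 ≤ δ) : Integrable (ktwIntegrand n m δ q) (Measure.pi fun _ => μ) :=
  ((integrable_wrIntegrand hint hq).const_mul _).mono'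
    (measurable_ktwIntegrand n m δ q).aestronglyMeasurable
    (ae_of_all _ fun v => by
      rw [Real.norm_of_nonneg (ktwIntegrand_nonneg hq hδ v)]
      exact ktwIntegrand_le_wrIntegrand hm hq hδ v)

lemma natCast_mul_ktw_le_WR (hint : Integrable (id : ℝ → ℝ) μ) (hm : 0 < m) (hq : 0 ≤ q)
    (hδ : 0 ≤ δ) : m * ktw n m δ μ q ≤ (1 + δ) * WR n m μ q := by
  have h : ktw n m δ μ q ≤ (1 + δ) / m * WR n m μ q := by
    rw [ktw_eq_integral, WR_eq_integral, ← integral_const_mul]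
    exact integral_mono (integrable_ktwIntegrand hint hm hq hδ)
      ((integrable_wrIntegrand hint hq).const_mul _) (ktwIntegrand_le_wrIntegrand hm hq hδ)
  have hm' : (0 : ℝ) < m := Nat.cast_pos.2 hm
  calc (m : ℝ) * ktw n m δ μ q ≤ m * ((1 + δ) / m * WR n m μ q) := by gcongr
    _ = (1 + δ) * WR n m μ q := by field_simp

lemma mul_measureReal_le_ktw (hint : Integrable (id : ℝ → ℝ) μ) (hm : 0 < m) (hq : 0 ≤ q)
    (hδ : 0 ≤ δ) :
    (1 + δ) * q * (Measure.pi fun _ : Fin n => μ).real {v | m ≤ demandCount n q v}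
      ≤ ktw n m δ μ q := by
  have hs : MeasurableSet {v : Fin n → ℝ | m ≤ demandCount n q v} :=
    measurable_demandCount n q measurableSet_Ici
  calc _ = ∫ v, {v | m ≤ demandCount n q v}.indicator (fun _ => (1 + δ) * q) v
        ∂(Measure.pi fun _ : Fin n => μ) := by
        rw [integral_indicator_const _ hs, smul_eq_mul, mul_comm]
    _ ≤ ktw n m δ μ q :=
        integral_mono ((integrable_const _).indicator hs) (integrable_ktwIntegrand hint hm hq hδ)
          (indicator_le_ktwIntegrand hq hδ)

lemma div_le_measureReal_of_ktw_eq (hint : Integrable (id : ℝ → ℝ) μ) (hm : 0 < m) (hq : 0 < q)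
    (hδ : 0 ≤ δ) (heq : ktw n m δ μ q = q) :
    δ / (1 + δ) ≤ (Measure.pi fun _ : Fin n => μ).real {v | demandCount n q v < m} := by
  have hs : MeasurableSet {v : Fin n → ℝ | m ≤ demandCount n q v} :=
    measurable_demandCount n q measurableSet_Ici
  have hcompl : {v : Fin n → ℝ | demandCount n q v < m} = {v | m ≤ demandCount n q v}ᶜ := by
    ext; simp
  have h := mul_measureReal_le_ktw hint hm hq.le hδ (n := n)
  rw [heq] at h
  rw [hcompl, probReal_compl_eq_one_sub hs, div_le_iff₀ (by positivity)]
  nlinarith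

lemma measurePreserving_removeNth {α : Type*} [MeasurableSpace α] (μ : Measure α)
    [IsProbabilityMeasure μ] {k : ℕ} (i : Fin (k + 1)) :
    MeasurePreserving i.removeNth (Measure.pi fun _ => μ) (Measure.pi fun _ => μ) :=
  measurePreserving_snd.comp (measurePreserving_piFinSuccAbove (fun _ => μ) i)

lemma integral_mul_comp_removeNth {α 𝕜 : Type*} [MeasurableSpace α] [RCLike 𝕜] (μ : Measure α)
    [SigmaFinite μ] {k : ℕ} (i : Fin (k + 1)) (f : α → 𝕜) (g : (Fin k → α) → 𝕜) :
    ∫ v, f (v i) * g (i.removeNth v) ∂(Measure.pi fun _ => μ)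
      = (∫ x, f x ∂μ) * ∫ w, g w ∂(Measure.pi fun _ => μ) := by
  rw [← integral_prod_mul]
  exact (measurePreserving_piFinSuccAbove (fun _ => μ) i).integral_comp' fun z => f z.1 * g z.2

lemma setIntegral_Ici_mul_measureReal_le (hq : 0 ≤ q) {k : ℕ} (i : Fin (k + 1)) :
    (∫ x in Set.Ici q, x ∂μ) * (Measure.pi fun _ => μ).real {v | demandCount (k + 1) q v < m}
      ≤ ∫ v, (Set.Ici q).indicator id (v i)
          * {w | demandCount k q w < m}.indicator 1 (i.removeNth v) ∂(Measure.pi fun _ => μ) := by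
  have hA : MeasurableSet {w : Fin k → ℝ | demandCount k q w < m} :=
    measurable_demandCount k q measurableSet_Iio
  have hsub : {v | demandCount (k + 1) q v < m} ⊆ i.removeNth ⁻¹' {w | demandCount k q w < m} :=
    fun v (hv : demandCount (k + 1) q v < m) => show demandCount k q (i.removeNth v) < m by
      have := demandCount_succAbove q i v
      omega
  rw [integral_mul_comp_removeNth, integral_indicator measurableSet_Ici, integral_indicator_one hA,
    ← (measurePreserving_removeNth μ i).measureReal_preimage hA.nullMeasurableSet]
  exact mul_le_mul_of_nonneg_left (measureReal_mono hsub)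
    (setIntegral_nonneg measurableSet_Ici fun x hx => hq.trans hx)

lemma natCast_mul_setIntegral_Ici_mul_measureReal_le_WR (hint : Integrable (id : ℝ → ℝ) μ)
    (hq : 0 ≤ q) :
    n * (∫ x in Set.Ici q, x ∂μ) * (Measure.pi fun _ : Fin n => μ).real {v | demandCount n q v < m}
      ≤ WR n m μ q := by
  cases n with
  | zero =>
    simpa [WR_eq_integral] using integral_nonneg fun v => wrIntegrand_nonneg (m := m) hq v
  | succ k =>
    have hterm (i : Fin (k + 1)) : Integrable (fun v : Fin (k + 1) → ℝ =>
        (Set.Ici q).indicator id (v i) * {w | demandCount k q w < m}.indicator 1 (i.removeNth v))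
        (Measure.pi fun _ => μ) := by
      have hA : Measurable
          ({w : Fin k → ℝ | demandCount k q w < m}.indicator (1 : (Fin k → ℝ) → ℝ)) :=
        measurable_const.indicator (measurable_demandCount k q measurableSet_Iio)
      exact (integrable_comp_eval (hint.indicator measurableSet_Ici)).mul_bdd
        (hA.comp (measurePreserving_removeNth μ i).measurable).aestronglyMeasurable
        (c := 1) (ae_of_all _ fun v => (norm_indicator_le_norm_self _ _).trans (by simp))
    calc _ = ∑ i : Fin (k + 1), (∫ x in Set.Ici q, x ∂μ)
          * (Measure.pi fun _ => μ).real {v | demandCount (k + 1) q v < m} := by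
          simp [mul_assoc]
      _ ≤ ∑ i : Fin (k + 1), ∫ v, (Set.Ici q).indicator id (v i)
          * {w | demandCount k q w < m}.indicator 1 (i.removeNth v) ∂(Measure.pi fun _ => μ) :=
          Finset.sum_le_sum fun i _ => setIntegral_Ici_mul_measureReal_le hq i
      _ = ∫ v, ∑ i : Fin (k + 1), (Set.Ici q).indicator id (v i)
          * {w | demandCount k q w < m}.indicator 1 (i.removeNth v) ∂(Measure.pi fun _ => μ) :=
          (integral_finsetSum _ fun i _ => hterm i).symm
      _ ≤ WR (k + 1) m μ q :=
          integral_mono (integrable_finsetSum _ fun i _ => hterm i) (integrable_wrIntegrand hint hq)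
            (sum_indicator_mul_le_wrIntegrand hq)

lemma OPTwelfare_le (hint : Integrable (id : ℝ → ℝ) μ) (hq : 0 ≤ q) :
    OPTwelfare n m μ ≤ m * q + n * ∫ x in Set.Ici q, x ∂μ := by
  have hint_sum := integrable_sum_filter_le hint n q
  calc OPTwelfare n m μ
      ≤ ∫ v, (m * q + ∑ i ∈ Finset.univ.filter (fun i => q ≤ v i), v i)
          ∂(Measure.pi fun _ : Fin n => μ) :=
        integral_mono_of_nonneg (ae_of_all _ maxWelfare_nonneg)
          ((integrable_const _).add hint_sum) (ae_of_all _ (maxWelfare_le hq))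
    _ = m * q + n * ∫ x in Set.Ici q, x ∂μ := by
        rw [integral_add (integrable_const _) hint_sum, integral_sum_filter_le hint n q]
        simp

end Expectation

end TWDPP

open TWDPP in
theorem twdpp_equilibrium_welfare_general
    (n m : ℕ) (hm : 1 ≤ m) (μ : Measure ℝ) [IsProbabilityMeasure μ]
    (hint : Integrable (id : ℝ → ℝ) μ)
    (δ : ℝ) (hδ : 0 < δ)
    (q : ℝ) (hq : 0 < q) (heq : ktw n m δ μ q = q) :
    OPTwelfare n m μ * min 1 δ / (2 * (1 + δ)) ≤ WR n m μ q := by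
  set W := WR n m μ q
  set D := n * ∫ x in Set.Ici q, x ∂μ
  set p := (Measure.pi fun _ : Fin n => μ).real {v | demandCount n q v < m}
  have hA : m * q ≤ (1 + δ) * W := heq ▸ natCast_mul_ktw_le_WR hint hm hq.le hδ.le
  have hp : δ / (1 + δ) ≤ p := div_le_measureReal_of_ktw_eq hint hm hq hδ.le heq
  have hC : D * p ≤ W := natCast_mul_setIntegral_Ici_mul_measureReal_le_WR hint hq.le
  have hOPT : OPTwelfare n m μ ≤ m * q + D := OPTwelfare_le hint hq.le
  have hD : 0 ≤ D :=
    mul_nonneg n.cast_nonneg (setIntegral_nonneg measurableSet_Ici fun x hx => hq.le.trans hx)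
  have hδp : δ ≤ (1 + δ) * p := by rwa [div_le_iff₀' (by linarith)] at hp
  rw [div_le_iff₀ (by positivity)]
  calc OPTwelfare n m μ * min 1 δ ≤ (m * q + D) * min 1 δ := by gcongr
    _ ≤ m * q + D * δ := by
        rw [add_mul]
        exact add_le_add (mul_le_of_le_one_right (by positivity) (min_le_left 1 δ))
          (mul_le_mul_of_nonneg_left (min_le_right 1 δ) hD)
    _ ≤ (1 + δ) * W + (1 + δ) * W := by
        refine add_le_add hA ?_
        calc D * δ ≤ D * ((1 + δ) * p) := by gcongr
          _ = (1 + δ) * (D * p) := by ring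
          _ ≤ (1 + δ) * W := by gcongr
    _ = W * (2 * (1 + δ)) := by ring

/-- Theorem (TWDPP welfare at equilibrium): if `q > 0` is an equilibrium price of the
TWDPP mechanism, i.e. `ktw_δ(q) = q`, then
`W_R(q) ≥ OPT · min(1, δ) / (2(1 + δ))`. -/
theorem twdpp_equilibrium_welfare
    (n m : ℕ) (hm : 1 ≤ m) (μ : Measure ℝ) [IsProbabilityMeasure μ]
    (hpos : ∀ᵐ x ∂μ, 0 ≤ x) (hint : Integrable (id : ℝ → ℝ) μ)
    (δ : ℝ) (hδ : 0 < δ)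
    (q : ℝ) (hq : 0 < q) (heq : ktw n m δ μ q = q) :
    OPTwelfare n m μ * min 1 δ / (2 * (1 + δ)) ≤ WR n m μ q :=
  twdpp_equilibrium_welfare_general n m hm μ hint δ hδ q hq heq
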